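/- Let $W_1, \dots, W_n \in \mathbb{R}^p$ and suppose $\lambda \in \mathbb{R}^p$ satisfies $1 + \lambda^T W_i > 0$ for all $i$ and $\sum_{i=1}^n \frac{W_i}{1 + \lambda^T W_i} = 0$. Define $\pi_i = \frac{1}{n(1 + \lambda^T W_i)}$. Then for any weights $\pi_1', \dots, \pi_n'$ with $\pi_i' \ge 0$, $\sum_{i=1}^n \pi_i' = 1$ and $\sum_{i=1}^n \pi_i' W_i = 0$, one has $\prod_{i=1}^n n\pi_i' \le \prod_{i=1}^n n\pi_i$. That is, the weights $\pi_i = \frac{1}{n(1+\lambda^T W_i)}$ attain the supremum defining the empirical likelihood ratio $\mathcal{R}_n = \sup\{\prod_{i=1}^n n\pi_i : \sum_i \pi_i W_i = 0, \sum_i \pi_i = 1, \pi_i \ge 0\}$. -/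
import Mathlib


open Matrix

/-- The Lagrange-multiplier weights `πᵢ = 1/(n(1 + λᵀWᵢ))` attain the supremum in the
definition of the empirical likelihood ratio: any feasible weights `π'` satisfy
`∏ n πᵢ' ≤ ∏ n πᵢ`. -/
theorem stmt_4 (n p : ℕ) (W : Fin n → Fin p → ℝ) (lam : Fin p → ℝ)
    (hpos : ∀ i, 0 < 1 + lam ⬝ᵥ W i)
    (hlag : ∑ i, (1 + lam ⬝ᵥ W i)⁻¹ • W i = 0)
    (π : Fin n → ℝ) (hπ : ∀ i, π i = 1 / (n * (1 + lam ⬝ᵥ W i))) :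
    ∀ π' : Fin n → ℝ, (∀ i, 0 ≤ π' i) → ∑ i, π' i = 1 → ∑ i, π' i • W i = 0 →
      ∏ i, (n : ℝ) * π' i ≤ ∏ i, (n : ℝ) * π i := by
  intro π' hnn hsum hW
  rcases Nat.eq_zero_or_pos n with hn | hn
  · subst hn; simp
  have hn' : (0 : ℝ) < n := by exact_mod_cast hn
  set z : Fin n → ℝ := fun i => (n : ℝ) * π' i * (1 + lam ⬝ᵥ W i) with hz
  have hznn : ∀ i, 0 ≤ z i := fun i =>
    mul_nonneg (mul_nonneg hn'.le (hnn i)) (hpos i).le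
  -- sum of z equals n
  have hzsum : ∑ i, z i = n := by
    have key : ∑ i, π' i * (lam ⬝ᵥ W i) = 0 := by
      have : lam ⬝ᵥ (∑ i, π' i • W i) = 0 := by rw [hW]; simp
      rw [← this, dotProduct]
      simp only [Finset.sum_apply, Pi.smul_apply, smul_eq_mul, Finset.mul_sum, dotProduct]
      rw [Finset.sum_comm]
      congr 1; ext i; exact Finset.sum_congr rfl fun j _ => by ring
    have : ∑ i, z i = (n : ℝ) * (∑ i, π' i + ∑ i, π' i * (lam ⬝ᵥ W i)) := by
      rw [← Finset.sum_add_distrib, Finset.mul_sum]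
      congr 1; ext i; simp [hz]; ring
    rw [this, hsum, key]; ring
  -- AM-GM with equal weights
  have amgm := Real.geom_mean_le_arith_mean_weighted Finset.univ
    (fun _ => (n : ℝ)⁻¹) z (fun i _ => by positivity)
    (by simp [Finset.card_univ]; field_simp) (fun i _ => hznn i)
  have hsum1 : ∑ i, (n : ℝ)⁻¹ * z i = 1 := by
    rw [← Finset.mul_sum, hzsum]; field_simp
  rw [hsum1] at amgm
  have hprodpow : ∏ i, z i ^ (n : ℝ)⁻¹ = (∏ i, z i) ^ (n : ℝ)⁻¹ := by
    rw [← Real.finset_prod_rpow _ _ (fun i _ => hznn i)]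
  rw [hprodpow] at amgm
  have hprodz : ∏ i, z i ≤ 1 := by
    by_contra h
    push_neg at h
    have : (1 : ℝ) < (∏ i, z i) ^ (n : ℝ)⁻¹ :=
      Real.one_lt_rpow_iff_of_pos (lt_trans one_pos h) |>.mpr (Or.inl ⟨h, by positivity⟩)
    linarith
  -- rewrite goal
  have hπval : ∀ i, (n : ℝ) * π i = (1 + lam ⬝ᵥ W i)⁻¹ := by
    intro i
    rw [hπ i]
    rw [mul_one_div, div_mul_eq_div_div, div_self hn'.ne', one_div]
  calc ∏ i, (n : ℝ) * π' i
      = (∏ i, z i) * ∏ i, (1 + lam ⬝ᵥ W i)⁻¹ := by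
        rw [← Finset.prod_mul_distrib]
        congr 1; ext i
        simp only [hz]
        rw [mul_assoc, mul_inv_cancel₀ (hpos i).ne', mul_one]
    _ ≤ 1 * ∏ i, (1 + lam ⬝ᵥ W i)⁻¹ := by
        apply mul_le_mul_of_nonneg_right hprodz
        exact Finset.prod_nonneg fun i _ => inv_nonneg.mpr (hpos i).le
    _ = ∏ i, (n : ℝ) * π i := by
        rw [one_mul]
        exact Finset.prod_congr rfl fun i _ => (hπval i).symm
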